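/- In the Lie algebra 𝔤, the linear span 𝔥 of {e₁, e₃, e₄} is a Lie subalgebra of dimension 3, and for any real numbers j₁, j₂ the linear functional λ on 𝔤 defined by λ(e₁) = j₁, λ(e₂) = 0, λ(e₃) = 0, λ(e₄) = j₂ vanishes on the derived subalgebra [𝔥, 𝔥]; i.e. 𝔥 is a polarization of λ. -/

import Mathlib

/-! Vectors of `𝔥` have vanishing `e₂`-coordinate, and for two such vectors only the bracket
`[e₃, e₄] = (k/2) e₃` survives, so `[𝔥, 𝔥] ⊆ ℝ e₃`; this lies in `𝔥` and in the kernel of `λ`.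
The dimension count holds because `e₁, e₃, e₄` are standard basis vectors. -/

/-- The structure constants `C^l_{ij}` of the Lie algebra `𝔤` (indices `0,…,3` for `1,…,4`):
the nonzero brackets are `[e₂,e₃] = k e₁`, `[e₂,e₄] = −(k/2) e₂`, `[e₃,e₄] = (k/2) e₃`. -/
noncomputable def structC (k : ℝ) (i j l : Fin 4) : ℝ :=
  if i = 1 ∧ j = 2 ∧ l = 0 then k
  else if i = 2 ∧ j = 1 ∧ l = 0 then -k
  else if i = 1 ∧ j = 3 ∧ l = 1 then -(k / 2)
  else if i = 3 ∧ j = 1 ∧ l = 1 then k / 2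
  else if i = 2 ∧ j = 3 ∧ l = 2 then k / 2
  else if i = 3 ∧ j = 2 ∧ l = 2 then -(k / 2)
  else 0

/-- The Lie bracket of `𝔤` in coordinates with respect to the basis `e₁,…,e₄`:
`[X,Y]^l = Σ_{i,j} C^l_{ij} X^i Y^j`. -/
noncomputable def gBracket (k : ℝ) (X Y : Fin 4 → ℝ) : Fin 4 → ℝ :=
  fun l => ∑ i : Fin 4, ∑ j : Fin 4, structC k i j l * X i * Y j

open Module Submodule

theorem finrank_span_image_single_one {R ι : Type*} [Ring R] [Nontrivial R]
    [StrongRankCondition R] [DecidableEq ι] (s : Finset ι) :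
    finrank R (span R ((fun i ↦ Pi.single i (1 : R)) '' (s : Set ι))) = s.card := by
  rw [Set.image_eq_range]
  exact (finrank_span_eq_card ((Pi.linearIndependent_single_one ι R).comp _
    Subtype.val_injective)).trans (Fintype.card_coe s)

theorem apply_eq_zero_of_mem_span {R ι : Type*} [Semiring R] {s : Set (ι → R)} {i : ι}
    (hs : ∀ v ∈ s, v i = 0) {x : ι → R} (hx : x ∈ span R s) : x i = 0 :=
  (span_le (p := LinearMap.ker (LinearMap.proj i)).mpr hs) hx

theorem gBracket_eq_smul_single_two (k : ℝ) {X Y : Fin 4 → ℝ} (hX : X 1 = 0) (hY : Y 1 = 0) :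
    gBracket k X Y = (k / 2 * (X 2 * Y 3 - X 3 * Y 2)) • Pi.single 2 1 := by
  funext l
  fin_cases l
  all_goals simp [gBracket, structC, Fin.sum_univ_four, hX, hY]
  ring

theorem gBracket_eq_smul_single_two_of_mem_span (k : ℝ) {X Y : Fin 4 → ℝ}
    (hX : X ∈ span ℝ ({Pi.single 0 1, Pi.single 2 1, Pi.single 3 1} : Set (Fin 4 → ℝ)))
    (hY : Y ∈ span ℝ ({Pi.single 0 1, Pi.single 2 1, Pi.single 3 1} : Set (Fin 4 → ℝ))) :
    gBracket k X Y = (k / 2 * (X 2 * Y 3 - X 3 * Y 2)) • Pi.single 2 1 := by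
  have generators_apply_one : ∀ v ∈ ({Pi.single 0 1, Pi.single 2 1, Pi.single 3 1} :
      Set (Fin 4 → ℝ)), v 1 = 0 := by
    simp
  exact gBracket_eq_smul_single_two k (apply_eq_zero_of_mem_span generators_apply_one hX)
    (apply_eq_zero_of_mem_span generators_apply_one hY)

theorem polarization_general (k : ℝ) :
    (∀ X ∈ Submodule.span ℝ ({Pi.single 0 1, Pi.single 2 1, Pi.single 3 1} :
        Set (Fin 4 → ℝ)),
      ∀ Y ∈ Submodule.span ℝ ({Pi.single 0 1, Pi.single 2 1, Pi.single 3 1} :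
        Set (Fin 4 → ℝ)),
      gBracket k X Y ∈ Submodule.span ℝ ({Pi.single 0 1, Pi.single 2 1, Pi.single 3 1} :
        Set (Fin 4 → ℝ))) ∧
    Module.finrank ℝ
      (Submodule.span ℝ ({Pi.single 0 1, Pi.single 2 1, Pi.single 3 1} :
        Set (Fin 4 → ℝ))) = 3 ∧
    (∀ j₁ j₂ : ℝ,
      ∀ X ∈ Submodule.span ℝ ({Pi.single 0 1, Pi.single 2 1, Pi.single 3 1} :
        Set (Fin 4 → ℝ)),
      ∀ Y ∈ Submodule.span ℝ ({Pi.single 0 1, Pi.single 2 1, Pi.single 3 1} :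
        Set (Fin 4 → ℝ)),
      j₁ * gBracket k X Y 0 + j₂ * gBracket k X Y 3 = 0) := by
  have span_eq : ({Pi.single 0 1, Pi.single 2 1, Pi.single 3 1} : Set (Fin 4 → ℝ)) =
      (fun i ↦ Pi.single i 1) '' (({0, 2, 3} : Finset (Fin 4)) : Set (Fin 4)) := by
    simp [Set.image_insert_eq]
  refine ⟨fun X hX Y hY ↦ ?_, ?_, fun j₁ j₂ X hX Y hY ↦ ?_⟩
  · rw [gBracket_eq_smul_single_two_of_mem_span k hX hY]
    exact smul_mem _ _ (subset_span (by simp))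
  · rw [span_eq, finrank_span_image_single_one]
    rfl
  · simp [gBracket_eq_smul_single_two_of_mem_span k hX hY]

/-- The span `𝔥` of `{e₁, e₃, e₄}` is a Lie subalgebra of `𝔤` of
dimension 3, and for any `j₁, j₂` the functional `λ` with `λ(e₁) = j₁`, `λ(e₂) = 0`,
`λ(e₃) = 0`, `λ(e₄) = j₂` vanishes on `[𝔥,𝔥]`; i.e. `𝔥` is a polarization of `λ`. -/
theorem polarization (k : ℝ) (hk : 0 < k) :
    (∀ X ∈ Submodule.span ℝ ({Pi.single 0 1, Pi.single 2 1, Pi.single 3 1} :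
        Set (Fin 4 → ℝ)),
      ∀ Y ∈ Submodule.span ℝ ({Pi.single 0 1, Pi.single 2 1, Pi.single 3 1} :
        Set (Fin 4 → ℝ)),
      gBracket k X Y ∈ Submodule.span ℝ ({Pi.single 0 1, Pi.single 2 1, Pi.single 3 1} :
        Set (Fin 4 → ℝ))) ∧
    Module.finrank ℝ
      (Submodule.span ℝ ({Pi.single 0 1, Pi.single 2 1, Pi.single 3 1} :
        Set (Fin 4 → ℝ))) = 3 ∧
    (∀ j₁ j₂ : ℝ,
      ∀ X ∈ Submodule.span ℝ ({Pi.single 0 1, Pi.single 2 1, Pi.single 3 1} :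
        Set (Fin 4 → ℝ)),
      ∀ Y ∈ Submodule.span ℝ ({Pi.single 0 1, Pi.single 2 1, Pi.single 3 1} :
        Set (Fin 4 → ℝ)),
      j₁ * gBracket k X Y 0 + j₂ * gBracket k X Y 3 = 0) :=
  polarization_general k
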